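/- arXiv:1608.06404 — 6 statements merged into one kernel-verified Lean document; each statement's English description precedes it below -/
import Mathlib

section
/- For every positive integer n, (1 + a·(a+√(a²+4))/2)^n = e(2n−1) + e(2n)·(a+√(a²+4))/2, where the equation is in the real numbers. -/
def e (a : ℕ) : ℕ → ℤ
  | 0 => 0
  | 1 => 1
  | (n+2) => a * e a (n+1) + e a n

lemma phi_sq (a : ℕ) : ((a : ℝ) + Real.sqrt (a^2 + 4)) / 2 * (((a : ℝ) + Real.sqrt (a^2 + 4)) / 2)
    = a * (((a : ℝ) + Real.sqrt (a^2 + 4)) / 2) + 1 := by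
  have h : Real.sqrt (a^2 + 4) ^ 2 = (a:ℝ)^2 + 4 :=
    Real.sq_sqrt (by positivity)
  linear_combination (1/4 : ℝ) * h

lemma pow_eq (a : ℕ) (m : ℕ) :
    (((a : ℝ) + Real.sqrt (a^2 + 4)) / 2) ^ (m + 1)
      = (e a m : ℝ) + (e a (m+1) : ℝ) * (((a : ℝ) + Real.sqrt (a^2 + 4)) / 2) := by
  induction m with
  | zero => simp [e]
  | succ k ih =>
    have : (((a : ℝ) + Real.sqrt (a^2 + 4)) / 2) ^ (k + 2)
        = (((a : ℝ) + Real.sqrt (a^2 + 4)) / 2) ^ (k + 1) * (((a : ℝ) + Real.sqrt (a^2 + 4)) / 2) := by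
      ring
    rw [this, ih, show e a (k+2) = a * e a (k+1) + e a k from rfl]
    push_cast
    linear_combination (e a (k+1) : ℝ) * phi_sq a

theorem stmt1 (a : ℕ) (ha : 0 < a) (n : ℕ) (hn : 0 < n) :
    (1 + (a : ℝ) * ((a + Real.sqrt (a^2 + 4)) / 2))^n
      = (e a (2*n - 1) : ℝ) + (e a (2*n) : ℝ) * ((a + Real.sqrt (a^2 + 4)) / 2) := by
  have h1 : (1 + (a : ℝ) * ((a + Real.sqrt (a^2 + 4)) / 2))
      = (((a : ℝ) + Real.sqrt (a^2 + 4)) / 2) ^ 2 := by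
    have hs : Real.sqrt (a^2 + 4) ^ 2 = (a:ℝ)^2 + 4 := Real.sq_sqrt (by positivity)
    linear_combination phi_sq a - (1/2 : ℝ) * hs
  rw [h1, ← pow_mul]
  have h2 : 2 * n = (2 * n - 1) + 1 := by omega
  rw [show (((a : ℝ) + Real.sqrt (a^2 + 4)) / 2) ^ (2*n) = (((a : ℝ) + Real.sqrt (a^2 + 4)) / 2) ^ ((2*n-1)+1) by rw [← h2]]
  rw [pow_eq, ← h2]
end

section
/- If x and y are positive integers satisfying x² + a·x·y − y² = 1, then there exists a positive integer n with x = e(2n−1) and y = e(2n). -/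
lemma aux (a : ℕ) (ha : 0 < a) : ∀ N : ℕ, ∀ x y : ℤ, 0 < x → 0 < y → y ≤ N →
    x^2 + a * x * y - y^2 = 1 →
    ∃ n : ℕ, 0 < n ∧ x = e a (2*n - 1) ∧ y = e a (2*n) := by
  have ha' : (1:ℤ) ≤ (a:ℤ) := by exact_mod_cast ha
  intro N
  induction N with
  | zero => intro x y hx hy hyN h; exfalso; omega
  | succ N ih =>
    intro x y hx hy hyN h
    by_cases hx1 : x = 1
    · subst hx1
      have hya : y = a := by
        have h0 : y * (y - a) = 0 := by linear_combination -h
        rcases mul_eq_zero.1 h0 with h1 | h1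
        · omega
        · linarith
      refine ⟨1, one_pos, ?_, ?_⟩
      · show (1:ℤ) = e a 1; rfl
      · show y = e a 2
        have : e a 2 = a * e a 1 + e a 0 := rfl
        simp [e] at this ⊢
        omega
    · have hx2 : 2 ≤ x := by omega
      have hax : 0 < (a:ℤ) * x := by positivity
      have key : y * (y - a*x) = x^2 - 1 := by linear_combination -h
      have hy' : 0 < y - a*x := by
        by_contra hc
        push_neg at hc
        nlinarith [mul_nonpos_of_nonneg_of_nonpos hy.le hc]
      have hx' : 0 < x - a*(y - a*x) := by
        by_contra hc
        push_neg at hc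
        have hc' : x ≤ (a:ℤ)*(y - a*x) := by linarith
        have h2 : (a:ℤ)*x*x ≤ (a:ℤ)*x*((a:ℤ)*(y - a*x)) :=
          mul_le_mul_of_nonneg_left hc' hax.le
        nlinarith [mul_pos hy' hy']
      have h' : (x - a*(y - a*x))^2 + a * (x - a*(y - a*x)) * (y - a*x) - (y - a*x)^2 = 1 := by
        linear_combination h
      have hlt : y - a*x ≤ N := by
        have h1 : (1:ℤ) ≤ (a:ℤ)*x := hax
        push_cast at hyN; linarith
      obtain ⟨n, hn, hxe, hye⟩ := ih (x - a*(y - a*x)) (y - a*x) hx' hy' hlt h'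
      obtain ⟨k, rfl⟩ : ∃ k, n = k + 1 := ⟨n - 1, by omega⟩
      have i1 : 2*(k+1) - 1 = 2*k + 1 := by omega
      have i2 : 2*(k+1) = 2*k + 2 := by omega
      rw [i1] at hxe; rw [i2] at hye
      refine ⟨k+2, by omega, ?_, ?_⟩
      · have i3 : 2*(k+2) - 1 = (2*k+1) + 2 := by omega
        rw [i3]
        have : e a ((2*k+1)+2) = a * e a (2*k+2) + e a (2*k+1) := rfl
        rw [this, ← hxe, ← hye]; ring
      · have i4 : 2*(k+2) = (2*k+2) + 2 := by omega
        rw [i4]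
        have : e a ((2*k+2)+2) = a * e a (2*k+3) + e a (2*k+2) := rfl
        rw [this, ← hye]
        have i3 : (2*k+3) = (2*k+1)+2 := by omega
        rw [i3]
        have : e a ((2*k+1)+2) = a * e a (2*k+2) + e a (2*k+1) := rfl
        rw [this, ← hxe, ← hye]; ring

theorem stmt2 (a : ℕ) (ha : 0 < a) (x y : ℤ) (hx : 0 < x) (hy : 0 < y)
    (h : x^2 + a * x * y - y^2 = 1) :
    ∃ n : ℕ, 0 < n ∧ x = e a (2*n - 1) ∧ y = e a (2*n) := by
  exact aux a ha y.toNat x y hx hy (by omega) h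
end

section
/- If x and y are positive integers satisfying x² + a·x·y − y² = −1, then there exists a nonnegative integer n with x = e(2n) and y = e(2n+1). -/
lemma e_step (a : ℕ) (n : ℕ) : e a (n+2) = a * e a (n+1) + e a n := rfl

lemma stmt3_aux (a : ℕ) (ha : 0 < a) : ∀ m : ℕ, ∀ x y : ℤ, 0 ≤ x → 0 < y → y = (m : ℤ) →
    x^2 + a * x * y - y^2 = -1 → ∃ n : ℕ, x = e a (2*n) ∧ y = e a (2*n + 1) := by
  intro m
  induction m using Nat.strong_induction_on with
  | _ m ih =>
    intro x y hx hy hym h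
    have ha1 : (1 : ℤ) ≤ (a : ℤ) := by exact_mod_cast ha
    rcases eq_or_lt_of_le hx with hx0 | hx0
    · have h1 : y^2 = 1 := by linear_combination -h - (x + (a:ℤ)*y) * hx0
      have hy1 : y = 1 := le_antisymm (by nlinarith [sq_nonneg (y - 1)]) (by omega)
      refine ⟨0, ?_, ?_⟩ <;> simp [e, ← hx0, hy1]
    · -- descent
      set y' := y - a * x with hy'def
      set x' := x - a * y' with hx'def
      have hy'pos : 0 < y' := by
        by_contra hc
        push_neg at hc
        nlinarith
      have hx'nonneg : 0 ≤ x' := by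
        by_contra hc
        push_neg at hc
        nlinarith
      have hnew : x'^2 + a * x' * y' - y'^2 = -1 := by
        simp only [hx'def, hy'def]
        linear_combination h
      have hy'lt : y' < y := by nlinarith
      set m' := y'.toNat with hm'def
      have hm' : y' = (m' : ℤ) := (Int.toNat_of_nonneg hy'pos.le).symm
      have hmlt : m' < m := by
        have : (m' : ℤ) < (m : ℤ) := by rw [← hm', ← hym]; exact hy'lt
        exact_mod_cast this
      obtain ⟨n, hn1, hn2⟩ := ih m' hmlt x' y' hx'nonneg hy'pos hm' hnew
      refine ⟨n + 1, ?_, ?_⟩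
      · have : e a (2*(n+1)) = a * e a (2*n+1) + e a (2*n) := by
          rw [show 2*(n+1) = 2*n+2 by ring]; exact e_step a (2*n)
        rw [this, ← hn1, ← hn2]
        simp only [hx'def]
        ring
      · have : e a (2*(n+1)+1) = a * e a (2*(n+1)) + e a (2*n+1) := by
          rw [show 2*(n+1)+1 = (2*n+1)+2 by ring, show 2*(n+1) = (2*n+1)+1 by ring]
          exact e_step a (2*n+1)
        rw [this]
        have hx_eq : x = e a (2*(n+1)) := by
          have h2 : e a (2*(n+1)) = a * e a (2*n+1) + e a (2*n) := by
            rw [show 2*(n+1) = 2*n+2 by ring]; exact e_step a (2*n)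
          rw [h2, ← hn1, ← hn2]; simp only [hx'def]; ring
        rw [← hx_eq, ← hn2]
        simp only [hy'def]
        ring

theorem stmt3 (a : ℕ) (ha : 0 < a) (x y : ℤ) (hx : 0 < x) (hy : 0 < y)
    (h : x^2 + a * x * y - y^2 = -1) :
    ∃ n : ℕ, x = e a (2*n) ∧ y = e a (2*n + 1) := by
  exact stmt3_aux a ha y.toNat x y hx.le hy (Int.toNat_of_nonneg hy.le).symm h
end

section
/- For all nonnegative integers i and j, 2·e(2(i+j)) = e(2j)·√(e(2i)²·(a²+4)+4) + e(2i)·√(e(2j)²·(a²+4)+4); in particular e(2i)²·(a²+4)+4 is a perfect square for every i. -/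
lemma e_nonneg (a : ℕ) : ∀ n, 0 ≤ e a n
  | 0 => le_refl 0
  | 1 => by norm_num [e]
  | (n+2) => by
      have h1 := e_nonneg a (n+1)
      have h2 := e_nonneg a n
      show 0 ≤ (a : ℤ) * e a (n+1) + e a n
      positivity

lemma e_cassini (a : ℕ) : ∀ n, (e a (n+1))^2 - a * e a (n+1) * e a n - (e a n)^2 = (-1)^n := by
  intro n
  induction n with
  | zero => norm_num [e]
  | succ k ih =>
      have h : e a (k+2) = a * e a (k+1) + e a k := rfl
      rw [h]
      linear_combination (-1 : ℤ) * ih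

lemma e_add (a : ℕ) : ∀ n m, e a (m+n) = e a (m+1) * e a n + e a m * e a (n+1) - a * e a m * e a n := by
  intro n
  induction n using Nat.twoStepInduction with
  | zero => intro m; simp [e]
  | one =>
      intro m
      have h2 : e a 2 = a * e a 1 + e a 0 := rfl
      simp [e] at h2 ⊢
      ring
  | more k ih1 ih2 =>
      intro m
      have h1 := ih1 m
      have h2 := ih2 m
      have e1 : e a (m+(k+2)) = a * e a (m+(k+1)) + e a (m+k) := by
        rw [show m+(k+2) = (m+k)+2 by ring, show m+(k+1) = (m+k)+1 by ring]; rfl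
      have e2 : e a (k+2) = a * e a (k+1) + e a k := rfl
      have e3 : e a (k+3) = a * e a (k+2) + e a (k+1) := rfl
      norm_num at h2
      rw [e1, e2, e3, e2]
      linear_combination (a : ℤ) * h2 + h1 + (a : ℤ) * e a m * e2

def L (a : ℕ) (i : ℕ) : ℤ := 2 * e a (2*i+1) - a * e a (2*i)

lemma L_sq (a : ℕ) (i : ℕ) : (L a i)^2 = (e a (2*i))^2 * (a^2 + 4) + 4 := by
  have h := e_cassini a (2*i)
  have hpow : ((-1 : ℤ))^(2*i) = 1 := by
    rw [pow_mul]; norm_num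
  rw [hpow] at h
  unfold L
  linear_combination (4 : ℤ) * h

lemma L_nonneg (a : ℕ) (i : ℕ) : 0 ≤ L a i := by
  unfold L
  rcases i with _ | i
  · norm_num [e]
  · have h : e a (2*(i+1)+1) = a * e a (2*(i+1)) + e a (2*i+1) := by
      rw [show 2*(i+1)+1 = (2*i+1)+2 by ring, show 2*(i+1) = (2*i+1)+1 by ring]
      rfl
    have h1 := e_nonneg a (2*(i+1))
    have h2 := e_nonneg a (2*i+1)
    have ha : (0:ℤ) ≤ a := Int.natCast_nonneg a
    nlinarith

lemma sqrt_eq (a : ℕ) (i : ℕ) :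
    Real.sqrt ((e a (2*i) : ℝ)^2 * (a^2 + 4) + 4) = (L a i : ℝ) := by
  have h : ((e a (2*i) : ℝ)^2 * (a^2 + 4) + 4) = ((L a i : ℝ))^2 := by
    exact_mod_cast (L_sq a i).symm
  rw [h, Real.sqrt_sq (by exact_mod_cast L_nonneg a i)]

theorem stmt5 (a : ℕ) (ha : 0 < a) :
    (∀ i j : ℕ, 2 * (e a (2*(i+j)) : ℝ)
        = (e a (2*j) : ℝ) * Real.sqrt ((e a (2*i) : ℝ)^2 * (a^2 + 4) + 4)
          + (e a (2*i) : ℝ) * Real.sqrt ((e a (2*j) : ℝ)^2 * (a^2 + 4) + 4))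
    ∧ ∀ i : ℕ, ∃ k : ℤ, (e a (2*i))^2 * (a^2 + 4) + 4 = k^2 := by
  constructor
  · intro i j
    rw [sqrt_eq a i, sqrt_eq a j]
    have key : 2 * e a (2*(i+j)) = e a (2*j) * L a i + e a (2*i) * L a j := by
      have h := e_add a (2*j) (2*i)
      rw [show 2*(i+j) = 2*i + 2*j by ring]
      unfold L
      linear_combination (2 : ℤ) * h
    exact_mod_cast congrArg (fun x : ℤ => (x : ℝ)) key
  · intro i
    exact ⟨L a i, (L_sq a i).symm⟩
end

section
/- For every nonnegative integer i, e(2i+1)²·(a²+4) − 4 is a perfect square. -/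
lemma e_rec (a n : ℕ) : e a (n+2) = a * e a (n+1) + e a n := rfl

lemma key (a : ℕ) : ∀ i : ℕ,
    (e a (2*i+2) + e a (2*i))^2 - ((a:ℤ)^2+4) * (e a (2*i+1))^2 = -4 := by
  intro i
  induction i with
  | zero => simp [e]
  | succ n ih =>
    have h1 : 2*(n+1)+2 = (2*n+2)+2 := by ring
    have h2 : 2*(n+1)+1 = (2*n+1)+2 := by ring
    have h3 : 2*(n+1) = 2*n+2 := by ring
    rw [h1, h2, h3, e_rec a (2*n+2), e_rec a (2*n+1)]
    have h4 : 2*n+1+1 = 2*n+2 := by ring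
    rw [h4, e_rec a (2*n)]
    rw [e_rec a (2*n)] at ih
    linear_combination ih

theorem stmt7 (a : ℕ) (ha : 0 < a) (i : ℕ) :
    ∃ k : ℤ, (e a (2*i + 1))^2 * (a^2 + 4) - 4 = k^2 := by
  refine ⟨e a (2*i+2) + e a (2*i), ?_⟩
  have := key a i
  push_cast at this ⊢
  linarith
end

section
/- For all nonnegative integers i and j, 2·F(2(i+j)) = F(2j)·√(5·F(2i)²+4) + F(2i)·√(5·F(2j)²+4), where F is the Fibonacci sequence. -/
lemma cassini (n : ℕ) :
    (Nat.fib (n+1) : ℤ)^2 - Nat.fib (n+1) * Nat.fib n - (Nat.fib n : ℤ)^2 = (-1)^n := by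
  induction n with
  | zero => simp
  | succ n ih =>
    have := Nat.fib_add_two (n := n)
    push_cast [this]
    push_cast at ih
    ring_nf
    ring_nf at ih
    linarith

lemma fib_add' (a b : ℕ) :
    (Nat.fib (a+b) : ℤ)
      = Nat.fib (a+1) * Nat.fib b + Nat.fib a * Nat.fib (b+1) - Nat.fib a * Nat.fib b := by
  cases b with
  | zero => simp
  | succ n =>
    have h := Nat.fib_add a n
    have h2 := Nat.fib_add_two (n := n)
    have : a + (n+1) = a + n + 1 := by ring
    rw [this, h]
    push_cast [h2]
    ring

lemma lucas_sq (n : ℕ) :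
    (5 : ℝ) * (Nat.fib (2*n) : ℝ)^2 + 4 = (2 * Nat.fib (2*n+1) - Nat.fib (2*n))^2 := by
  have h := cassini (2*n)
  have : ((-1 : ℤ))^(2*n) = 1 := by
    rw [pow_mul]; norm_num
  rw [this] at h
  have hr : ((Nat.fib (2*n+1) : ℝ))^2 - Nat.fib (2*n+1) * Nat.fib (2*n)
      - (Nat.fib (2*n) : ℝ)^2 = 1 := by
    exact_mod_cast congrArg (Int.cast : ℤ → ℝ) h
  nlinarith [hr]

lemma sqrt_lucas (n : ℕ) :
    Real.sqrt (5 * (Nat.fib (2*n) : ℝ)^2 + 4)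
      = 2 * Nat.fib (2*n+1) - Nat.fib (2*n) := by
  rw [lucas_sq n]
  apply Real.sqrt_sq
  have := Nat.fib_le_fib_succ (n := 2*n)
  have : (Nat.fib (2*n) : ℝ) ≤ Nat.fib (2*n+1) := by exact_mod_cast this
  linarith [(Nat.cast_nonneg (Nat.fib (2*n+1)) : (0:ℝ) ≤ _)]

theorem stmt10 (i j : ℕ) :
    2 * (Nat.fib (2*(i+j)) : ℝ)
      = (Nat.fib (2*j) : ℝ) * Real.sqrt (5 * (Nat.fib (2*i) : ℝ)^2 + 4)
        + (Nat.fib (2*i) : ℝ) * Real.sqrt (5 * (Nat.fib (2*j) : ℝ)^2 + 4) := by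
  rw [sqrt_lucas i, sqrt_lucas j]
  have h : (2*(i+j)) = (2*i) + (2*j) := by ring
  rw [h]
  have := fib_add' (2*i) (2*j)
  have hr : (Nat.fib (2*i+2*j) : ℝ)
      = Nat.fib (2*i+1) * Nat.fib (2*j) + Nat.fib (2*i) * Nat.fib (2*j+1)
        - Nat.fib (2*i) * Nat.fib (2*j) := by exact_mod_cast congrArg (Int.cast : ℤ → ℝ) this
  rw [hr]; ring
end
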